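/- arXiv:1111.2240 — 4 statements merged into one kernel-verified Lean document; each statement's English description precedes it below -/
import Mathlib

section
/- Let R be a commutative ring, k an integer, and let (X,d), (X̂,d̂) be Q(k)-objects over R with leading parts e, ê. Let γ : ⊕_{i,j} X_{i,j} → ⊕_{i,j} X̂_{i,j} be an R-linear map with γ ∘ d_j = d̂_j ∘ γ for all j and γ(X_{i,j}) ⊆ ⊕_{l≥i} X̂_{l,j} for all i,j, and set δ_{i,j} := pr̂_{i,j} ∘ γ|_{X_{i,j}} : X_{i,j} → X̂_{i,j} (the maps δ form a chain map between the leading-part complexes). Assume: (1) there is s : ℤ → ℤ such that X_{l,j} = 0 and X̂_{l,j} = 0 whenever l ≥ −s(j); (2) for all i,j the map ker e_{i,j} / im e_{i−1,j−k} → ker ê_{i,j} / im ê_{i−1,j−k} induced by δ is an isomorphism of R-modules. Then for every j the map induced by γ from ker d_j / im d_{j−k} to ker d̂_j / im d̂_{j−k} is an isomorphism of R-modules. -/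
open DirectSum

/-- The leading part `e_{i,j} := pr_{i+1,j+k} ∘ d_j ∘ incl_{i,j} : X_{i,j} → X_{i+1,j+k}`
of a `Q(k)`-object `(X, d)`. -/
noncomputable def leadingPart (R : Type*) [CommRing R] (k : ℤ)
    (X : ℤ → ℤ → Type*) [∀ i j, AddCommGroup (X i j)] [∀ i j, Module R (X i j)]
    (d : ∀ j : ℤ, (⨁ i, X i j) →ₗ[R] ⨁ i, X i (j + k)) (i j : ℤ) :
    X i j →ₗ[R] X (i + 1) (j + k) :=
  (DirectSum.component R ℤ (fun l => X l (j + k)) (i + 1)) ∘ₗ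
    (d j) ∘ₗ (DirectSum.lof R ℤ (fun l => X l j) i)

/-- The component `δ_{i,j} := pr̂_{i,j} ∘ γ ∘ incl_{i,j} : X_{i,j} → X̂_{i,j}`
of a morphism `γ` of `Q(k)`-objects. -/
noncomputable def diagPart (R : Type*) [CommRing R]
    (X Y : ℤ → ℤ → Type*) [∀ i j, AddCommGroup (X i j)] [∀ i j, Module R (X i j)]
    [∀ i j, AddCommGroup (Y i j)] [∀ i j, Module R (Y i j)]
    (γ : ∀ j : ℤ, (⨁ i, X i j) →ₗ[R] ⨁ i, Y i j) (i j : ℤ) :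
    X i j →ₗ[R] Y i j :=
  (DirectSum.component R ℤ (fun l => Y l j) i) ∘ₗ
    (γ j) ∘ₗ (DirectSum.lof R ℤ (fun l => X l j) i)

/-! `γ` induces isomorphisms on homology iff its mapping cone, with differential
`(x, y) ↦ (-d x, γ x + d̂ y)`, is acyclic. The lowest filtration components of a cone cycle
form a cycle in the cone of `δ` on the leading parts, which is acyclic because `δ` is a
quasi-isomorphism; subtracting a cone boundary therefore pushes the cycle one filtration step up.
As the filtration is bounded above, finitely many such steps kill the cycle. -/

section VanishingBelow

variable {R : Type*} [Semiring R] {β β' : ℤ → Type*}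
  [∀ i, AddCommMonoid (β i)] [∀ i, Module R (β i)]
  [∀ i, AddCommMonoid (β' i)] [∀ i, Module R (β' i)]

variable (R β) in
def vanishingBelow (t : ℤ) : Submodule R (⨁ i, β i) where
  carrier := {z | ∀ l < t, z l = 0}
  add_mem' hz hw l hl := by simp [hz l hl, hw l hl]
  zero_mem' _ _ := rfl
  smul_mem' c z hz l hl := by rw [DirectSum.smul_apply, hz l hl, smul_zero]

theorem mem_vanishingBelow {t : ℤ} {z : ⨁ i, β i} :
    z ∈ vanishingBelow R β t ↔ ∀ l < t, z l = 0 :=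
  Iff.rfl

theorem vanishingBelow_antitone : Antitone (vanishingBelow R β) :=
  fun _ _ hst _ hz l hl => hz l (lt_of_lt_of_le hl hst)

theorem mem_vanishingBelow_add_one_iff {t : ℤ} {z : ⨁ i, β i} :
    z ∈ vanishingBelow R β (t + 1) ↔ z ∈ vanishingBelow R β t ∧ z t = 0 := by
  simp only [mem_vanishingBelow, Int.lt_add_one_iff, le_iff_lt_or_eq]
  exact ⟨fun h => ⟨fun l hl => h l (.inl hl), h t (.inr rfl)⟩,
    fun h l hl => hl.elim (h.1 l) (fun hlt => hlt ▸ h.2)⟩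

theorem lof_mem_vanishingBelow (i : ℤ) (u : β i) : lof R ℤ β i u ∈ vanishingBelow R β i :=
  fun _ hl => DFinsupp.single_eq_of_ne hl.ne

theorem erase_mem_vanishingBelow {t : ℤ} {z : ⨁ i, β i} (hz : z ∈ vanishingBelow R β t) :
    DFinsupp.erase t z ∈ vanishingBelow R β (t + 1) :=
  mem_vanishingBelow_add_one_iff.2 ⟨fun l hl => by simp [hz l hl], DFinsupp.erase_same⟩

theorem exists_mem_vanishingBelow (z : ⨁ i, β i) : ∃ t, z ∈ vanishingBelow R β t := by
  classical
  obtain ⟨t, ht⟩ := z.support.bddBelow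
  exact ⟨t, fun l hl => not_not.1 fun h => (ht (DFinsupp.mem_support_iff.2 h)).not_gt hl⟩

theorem eq_zero_of_mem_vanishingBelow {t : ℤ} (hβ : ∀ l, t ≤ l → Subsingleton (β l))
    {z : ⨁ i, β i} (hz : z ∈ vanishingBelow R β t) : z = 0 :=
  DFinsupp.ext fun l => (lt_or_ge l t).elim (hz l) fun hl => (hβ l hl).elim _ _

def RaisesFiltrationBy (c : ℤ) (f : (⨁ i, β i) →ₗ[R] ⨁ i, β' i) : Prop :=
  ∀ (i : ℤ) (u : β i) (l : ℤ), l < i + c → f (lof R ℤ β i u) l = 0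

namespace RaisesFiltrationBy

variable {c t : ℤ} {f : (⨁ i, β i) →ₗ[R] ⨁ i, β' i}

theorem map_mem (hf : RaisesFiltrationBy c f) {z : ⨁ i, β i} (hz : z ∈ vanishingBelow R β t) :
    f z ∈ vanishingBelow R β' (t + c) := by
  classical
  rw [← DirectSum.sum_support_of z, map_sum]
  refine Submodule.sum_mem _ fun i hi l hl => ?_
  have hti : t ≤ i := not_lt.1 fun h => DFinsupp.mem_support_iff.1 hi (hz i h)
  exact hf i (z i) l (by omega)

theorem apply_eq_apply_lof (hf : RaisesFiltrationBy c f) {z : ⨁ i, β i}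
    (hz : z ∈ vanishingBelow R β t) {m : ℤ} (hm : m ≤ t + c) :
    f z m = f (lof R ℤ β t (z t)) m := by
  conv_lhs => rw [← DFinsupp.single_add_erase t z]
  rw [map_add, DirectSum.add_apply, hf.map_mem (erase_mem_vanishingBelow hz) _ (by omega),
    add_zero]
  rfl

end RaisesFiltrationBy

end VanishingBelow

section QObject

variable (R : Type*) [CommRing R] (k : ℤ)
  (X Xh : ℤ → ℤ → Type*) [∀ i j, AddCommGroup (X i j)] [∀ i j, Module R (X i j)]
  [∀ i j, AddCommGroup (Xh i j)] [∀ i j, Module R (Xh i j)]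
  (d : ∀ j : ℤ, (⨁ i, X i j) →ₗ[R] ⨁ i, X i (j + k))
  (dh : ∀ j : ℤ, (⨁ i, Xh i j) →ₗ[R] ⨁ i, Xh i (j + k))
  (γ : ∀ j : ℤ, (⨁ i, X i j) →ₗ[R] ⨁ i, Xh i j)

/-- `δ` induces an injection `ker e_{i+1,j+k} / im e_{i,j} → ker ê_{i+1,j+k} / im ê_{i,j}`. -/
def LeadingHomologyInjective (i j : ℤ) : Prop :=
  ∀ x : X (i + 1) (j + k), x ∈ LinearMap.ker (leadingPart R k X d (i + 1) (j + k)) →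
    diagPart R X Xh γ (i + 1) (j + k) x ∈ LinearMap.range (leadingPart R k Xh dh i j) →
    x ∈ LinearMap.range (leadingPart R k X d i j)

/-- `δ` induces a surjection `ker e_{i+1,j+k} / im e_{i,j} → ker ê_{i+1,j+k} / im ê_{i,j}`. -/
def LeadingHomologySurjective (i j : ℤ) : Prop :=
  ∀ y : Xh (i + 1) (j + k), y ∈ LinearMap.ker (leadingPart R k Xh dh (i + 1) (j + k)) →
    ∃ x ∈ LinearMap.ker (leadingPart R k X d (i + 1) (j + k)),
      diagPart R X Xh γ (i + 1) (j + k) x - y ∈ LinearMap.range (leadingPart R k Xh dh i j)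

variable {R k X Xh d dh γ}

theorem leadingPart_apply_of_mem_vanishingBelow {t j : ℤ} (hd : RaisesFiltrationBy 1 (d j))
    {x : ⨁ i, X i j} (hx : x ∈ vanishingBelow R (fun l => X l j) t) :
    leadingPart R k X d t j (x t) = d j x (t + 1) :=
  (hd.apply_eq_apply_lof hx le_rfl).symm

theorem diagPart_apply_of_mem_vanishingBelow {t j : ℤ} (hγ : RaisesFiltrationBy 0 (γ j))
    {x : ⨁ i, X i j} (hx : x ∈ vanishingBelow R (fun l => X l j) t) :
    diagPart R X Xh γ t j (x t) = γ j x t :=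
  (hγ.apply_eq_apply_lof hx (by omega)).symm

theorem diagPart_comp_leadingPart {j : ℤ} (hd : RaisesFiltrationBy 1 (d j))
    (hdh : RaisesFiltrationBy 1 (dh j)) (hγ : RaisesFiltrationBy 0 (γ j))
    (hγ' : RaisesFiltrationBy 0 (γ (j + k))) (hγd : γ (j + k) ∘ₗ d j = dh j ∘ₗ γ j) (i : ℤ) :
    diagPart R X Xh γ (i + 1) (j + k) ∘ₗ leadingPart R k X d i j =
      leadingPart R k Xh dh i j ∘ₗ diagPart R X Xh γ i j := by
  ext u
  have hu := lof_mem_vanishingBelow (R := R) (β := fun l => X l j) i u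
  have hγu : γ j (lof R ℤ _ i u) ∈ vanishingBelow R _ i := by simpa using hγ.map_mem hu
  calc diagPart R X Xh γ (i + 1) (j + k) (d j (lof R ℤ _ i u) (i + 1))
      = (γ (j + k) ∘ₗ d j) (lof R ℤ _ i u) (i + 1) :=
        diagPart_apply_of_mem_vanishingBelow hγ' (hd.map_mem hu)
    _ = dh j (γ j (lof R ℤ _ i u)) (i + 1) := by rw [hγd]; rfl
    _ = leadingPart R k Xh dh i j (γ j (lof R ℤ _ i u) i) :=
        (leadingPart_apply_of_mem_vanishingBelow hdh hγu).symm

theorem exists_correction_mem_vanishingBelow (hd : ∀ j, RaisesFiltrationBy 1 (d j))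
    (hdh : ∀ j, RaisesFiltrationBy 1 (dh j)) (hγ : ∀ j, RaisesFiltrationBy 0 (γ j))
    {p j : ℤ} (hγd : γ (j + k + k) ∘ₗ d (j + k) = dh (j + k) ∘ₗ γ (j + k))
    (hinj : LeadingHomologyInjective R k X Xh d dh γ (p + 1) (j + k))
    (hsurj : LeadingHomologySurjective R k X Xh d dh γ p j)
    {x : ⨁ i, X i (j + k + k)} {y : ⨁ i, Xh i (j + k)}
    (hdx : d (j + k + k) x = 0) (hxy : γ (j + k + k) x + dh (j + k) y = 0)
    (hx : x ∈ vanishingBelow R _ (p + 1 + 1)) (hy : y ∈ vanishingBelow R _ (p + 1)) :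
    ∃ x' y', x + d (j + k) x' ∈ vanishingBelow R _ (p + 1 + 1 + 1) ∧
      y - γ (j + k) x' - dh j y' ∈ vanishingBelow R _ (p + 1 + 1) := by
  set a := x (p + 1 + 1)
  set b := y (p + 1)
  have ha : leadingPart R k X d (p + 1 + 1) (j + k + k) a = 0 := by
    rw [leadingPart_apply_of_mem_vanishingBelow (hd _) hx, hdx]
    rfl
  have hab : diagPart R X Xh γ (p + 1 + 1) (j + k + k) a +
      leadingPart R k Xh dh (p + 1) (j + k) b = 0 := by
    rw [diagPart_apply_of_mem_vanishingBelow (hγ _) hx,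
      leadingPart_apply_of_mem_vanishingBelow (hdh _) hy, ← DirectSum.add_apply, hxy]
    rfl
  obtain ⟨a₀, ha₀⟩ := hinj a ha ⟨-b, by rw [map_neg, neg_eq_of_add_eq_zero_left hab]⟩
  have hc : leadingPart R k Xh dh (p + 1) (j + k)
      (b + diagPart R X Xh γ (p + 1) (j + k) a₀) = 0 := by
    rw [map_add, ← LinearMap.comp_apply (leadingPart R k Xh dh _ _),
      ← diagPart_comp_leadingPart (hd _) (hdh _) (hγ _) (hγ _) hγd, LinearMap.comp_apply,
      ha₀]
    exact (add_comm _ _).trans hab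
  obtain ⟨u, hu, v, hv⟩ := hsurj _ hc
  refine ⟨lof R ℤ _ (p + 1) (u - a₀), lof R ℤ _ p (-v), ?_, ?_⟩
  · refine mem_vanishingBelow_add_one_iff.2
      ⟨add_mem hx ((hd _).map_mem (lof_mem_vanishingBelow _ _)), ?_⟩
    show a + leadingPart R k X d (p + 1) (j + k) (u - a₀) = 0
    rw [map_sub, hu, ha₀]
    abel
  · refine mem_vanishingBelow_add_one_iff.2 ⟨sub_mem (sub_mem hy ?_) ?_, ?_⟩
    · simpa using (hγ _).map_mem
        (lof_mem_vanishingBelow (R := R) (β := fun l => X l (j + k)) _ (u - a₀))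
    · exact (hdh _).map_mem (lof_mem_vanishingBelow _ _)
    show b - diagPart R X Xh γ (p + 1) (j + k) (u - a₀) -
      leadingPart R k Xh dh p j (-v) = 0
    rw [map_sub, map_neg, hv]
    abel

theorem exists_cone_preimage_of_mem_vanishingBelow (hd : ∀ j, RaisesFiltrationBy 1 (d j))
    (hdh : ∀ j, RaisesFiltrationBy 1 (dh j)) (hγ : ∀ j, RaisesFiltrationBy 0 (γ j)) {j N : ℤ}
    (hdd : d (j + k + k) ∘ₗ d (j + k) = 0) (hddh : dh (j + k) ∘ₗ dh j = 0)
    (hγd : γ (j + k + k) ∘ₗ d (j + k) = dh (j + k) ∘ₗ γ (j + k))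
    (hinj : ∀ i, LeadingHomologyInjective R k X Xh d dh γ i (j + k))
    (hsurj : ∀ i, LeadingHomologySurjective R k X Xh d dh γ i j)
    (hX : ∀ l, N ≤ l → Subsingleton (X l (j + k + k)))
    (hXh : ∀ l, N ≤ l → Subsingleton (Xh l (j + k)))
    {t : ℤ} (ht : t ≤ N) {x : ⨁ i, X i (j + k + k)} {y : ⨁ i, Xh i (j + k)}
    (hdx : d (j + k + k) x = 0) (hxy : γ (j + k + k) x + dh (j + k) y = 0)
    (hx : x ∈ vanishingBelow R _ (t + 1)) (hy : y ∈ vanishingBelow R _ t) :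
    ∃ x' y', x + d (j + k) x' = 0 ∧ y = γ (j + k) x' + dh j y' := by
  induction t, ht using Int.leInductionDown generalizing x y with
  | base =>
    have hx0 := eq_zero_of_mem_vanishingBelow (fun l hl => hX l (by omega)) hx
    have hy0 := eq_zero_of_mem_vanishingBelow hXh hy
    exact ⟨0, 0, by simp [hx0], by simp [hy0]⟩
  | pred t _ ih =>
    obtain ⟨p, rfl⟩ : ∃ p, t = p + 1 + 1 := ⟨t - 2, by ring⟩
    rw [show p + 1 + 1 - 1 = p + 1 by ring] at hx hy
    obtain ⟨x', y', hx', hy'⟩ := exists_correction_mem_vanishingBelow hd hdh hγ hγd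
      (hinj (p + 1)) (hsurj p) hdx hxy hx hy
    obtain ⟨x'', y'', hx'', hy''⟩ := ih
      (by rw [map_add, hdx, ← LinearMap.comp_apply, hdd]; simp)
      (by
        rw [map_add, map_sub, map_sub, ← LinearMap.comp_apply (γ _), hγd,
          ← LinearMap.comp_apply (dh _) (dh _), hddh, LinearMap.comp_apply]
        simp [hxy])
      hx' hy'
    refine ⟨x' + x'', y' + y'', by rw [map_add, ← add_assoc, hx''], ?_⟩
    rw [sub_sub, sub_eq_iff_eq_add] at hy''
    rw [map_add, map_add, hy'']
    abel

theorem exists_cone_preimage (hd : ∀ j, RaisesFiltrationBy 1 (d j))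
    (hdh : ∀ j, RaisesFiltrationBy 1 (dh j)) (hγ : ∀ j, RaisesFiltrationBy 0 (γ j)) {j N : ℤ}
    (hdd : d (j + k + k) ∘ₗ d (j + k) = 0) (hddh : dh (j + k) ∘ₗ dh j = 0)
    (hγd : γ (j + k + k) ∘ₗ d (j + k) = dh (j + k) ∘ₗ γ (j + k))
    (hinj : ∀ i, LeadingHomologyInjective R k X Xh d dh γ i (j + k))
    (hsurj : ∀ i, LeadingHomologySurjective R k X Xh d dh γ i j)
    (hX : ∀ l, N ≤ l → Subsingleton (X l (j + k + k)))
    (hXh : ∀ l, N ≤ l → Subsingleton (Xh l (j + k)))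
    (x : ⨁ i, X i (j + k + k)) (y : ⨁ i, Xh i (j + k))
    (hdx : d (j + k + k) x = 0) (hxy : γ (j + k + k) x + dh (j + k) y = 0) :
    ∃ x' y', x + d (j + k) x' = 0 ∧ y = γ (j + k) x' + dh j y' := by
  obtain ⟨tx, htx⟩ := exists_mem_vanishingBelow (R := R) x
  obtain ⟨ty, hty⟩ := exists_mem_vanishingBelow (R := R) y
  exact exists_cone_preimage_of_mem_vanishingBelow hd hdh hγ hdd hddh hγd hinj hsurj hX hXh
    (by omega : min (tx - 1) (min ty N) ≤ N) hdx hxy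
    (vanishingBelow_antitone (by omega) htx) (vanishingBelow_antitone (by omega) hty)

end QObject

/-- Let `γ` be a morphism of `Q(k)`-objects `(X,d) → (X̂,d̂)` which are bounded
(`X_{l,j} = X̂_{l,j} = 0` for `l ≥ −s(j)`).  If the maps `δ_{i,j}` induce isomorphisms on
the homology of the leading-part complexes (stated elementwise: the induced map
`ker e_{i+1,j+k}/im e_{i,j} → ker ê_{i+1,j+k}/im ê_{i,j}` is injective and surjective),
then `γ` induces isomorphisms `ker d_{j+k}/im d_j → ker d̂_{j+k}/im d̂_j` on the homology
of the total complexes (again stated elementwise). -/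
theorem stmt_0 (R : Type*) [CommRing R] (k : ℤ)
    (X Xh : ℤ → ℤ → Type*) [∀ i j, AddCommGroup (X i j)] [∀ i j, Module R (X i j)]
    [∀ i j, AddCommGroup (Xh i j)] [∀ i j, Module R (Xh i j)]
    (d : ∀ j : ℤ, (⨁ i, X i j) →ₗ[R] ⨁ i, X i (j + k))
    (dh : ∀ j : ℤ, (⨁ i, Xh i j) →ₗ[R] ⨁ i, Xh i (j + k))
    (hdd : ∀ j, d (j + k) ∘ₗ d j = 0)
    (hfilt : ∀ (j i : ℤ) (x : X i j) (l : ℤ), l ≤ i →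
      (d j (DirectSum.lof R ℤ (fun l => X l j) i x)) l = 0)
    (hddh : ∀ j, dh (j + k) ∘ₗ dh j = 0)
    (hfilth : ∀ (j i : ℤ) (x : Xh i j) (l : ℤ), l ≤ i →
      (dh j (DirectSum.lof R ℤ (fun l => Xh l j) i x)) l = 0)
    (γ : ∀ j : ℤ, (⨁ i, X i j) →ₗ[R] ⨁ i, Xh i j)
    (hγd : ∀ j, γ (j + k) ∘ₗ d j = dh j ∘ₗ γ j)
    (hγfilt : ∀ (j i : ℤ) (x : X i j) (l : ℤ), l < i →
      (γ j (DirectSum.lof R ℤ (fun l => X l j) i x)) l = 0)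
    (hbound : ∃ s : ℤ → ℤ, ∀ l j : ℤ, -(s j) ≤ l →
      Subsingleton (X l j) ∧ Subsingleton (Xh l j))
    (hiso : ∀ i j : ℤ,
      (∀ x : X (i + 1) (j + k), x ∈ LinearMap.ker (leadingPart R k X d (i + 1) (j + k)) →
        diagPart R X Xh γ (i + 1) (j + k) x ∈ LinearMap.range (leadingPart R k Xh dh i j) →
        x ∈ LinearMap.range (leadingPart R k X d i j)) ∧
      (∀ y : Xh (i + 1) (j + k), y ∈ LinearMap.ker (leadingPart R k Xh dh (i + 1) (j + k)) →
        ∃ x ∈ LinearMap.ker (leadingPart R k X d (i + 1) (j + k)),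
          diagPart R X Xh γ (i + 1) (j + k) x - y
            ∈ LinearMap.range (leadingPart R k Xh dh i j))) :
    ∀ j : ℤ,
      (∀ x, x ∈ LinearMap.ker (d (j + k)) → γ (j + k) x ∈ LinearMap.range (dh j) →
        x ∈ LinearMap.range (d j)) ∧
      (∀ y, y ∈ LinearMap.ker (dh (j + k)) →
        ∃ x ∈ LinearMap.ker (d (j + k)), γ (j + k) x - y ∈ LinearMap.range (dh j)) := by
  obtain ⟨s, hs⟩ := hbound
  have hd : ∀ j, RaisesFiltrationBy 1 (d j) := fun j i u l hl => hfilt j i u l (by omega)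
  have hdh : ∀ j, RaisesFiltrationBy 1 (dh j) := fun j i u l hl => hfilth j i u l (by omega)
  have hγ : ∀ j, RaisesFiltrationBy 0 (γ j) := fun j i u l hl => hγfilt j i u l (by omega)
  have cone := fun j => exists_cone_preimage (N := max (-s (j + k + k)) (-s (j + k)))
    hd hdh hγ (hdd (j + k)) (hddh j) (hγd (j + k)) (fun i => (hiso i (j + k)).1)
    (fun i => (hiso i j).2) (fun l hl => (hs l _ (by omega)).1)
    (fun l hl => (hs l _ (by omega)).2)
  intro j
  constructor
  · obtain ⟨j₀, rfl⟩ : ∃ j₀, j = j₀ + k := ⟨j - k, by ring⟩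
    rintro x hx ⟨z, hz⟩
    obtain ⟨x', -, hx', -⟩ := cone j₀ x (-z) hx (by rw [map_neg, hz, add_neg_cancel])
    exact ⟨-x', by rw [map_neg, neg_eq_of_add_eq_zero_left hx']⟩
  · intro y hy
    obtain ⟨x', y', hx', hy'⟩ := cone j 0 y (map_zero _) (by rw [map_zero, zero_add]; exact hy)
    exact ⟨x', by simpa using hx', -y', by rw [map_neg, hy']; abel⟩
end

section
/- Let k ∈ ℕ and let φ : Σ(k,2) → {−1,1} be a function such that for every 3-face θ ∈ Σ(k,3), the product of φ over the six boundary 2-faces of θ equals 1. Then there exists s : Σ(k,1) → {−1,1} such that for every 2-face ε ∈ Σ(k,2), the product of s over the four boundary edges of ε equals φ(ε). -/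
/-- `ε ∈ Σ(k,n)`: a tuple in `{0,1,*}^k` (here `Option Bool`, with `none` playing the
role of `*`, `some false` of `0` and `some true` of `1`) with exactly `n` entries `*`. -/
def IsCubeFace (k : ℕ) (n : ℕ) (ε : Fin k → Option Bool) : Prop :=
  (Finset.univ.filter fun i => ε i = none).card = n

section Aux

variable {k : ℕ}

lemma last_notMem_image (S : Finset (Fin k)) :
    Fin.last k ∉ S.image Fin.castSucc := by
  simp only [Finset.mem_image, not_exists, not_and]
  intro i _ h
  exact absurd h (Fin.castSucc_lt_last i).ne

lemma prod_image_castSucc (S : Finset (Fin k)) (f : Fin (k + 1) → ℤˣ) :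
    ∏ j ∈ S.image Fin.castSucc, f j = ∏ i ∈ S, f i.castSucc :=
  Finset.prod_image fun _ _ _ _ h => Fin.castSucc_injective k h

lemma filter_snoc_some (x : Fin k → Option Bool) (c : Bool) :
    (Finset.univ.filter fun i : Fin (k + 1) => (Fin.snoc x (some c) : Fin (k + 1) → Option Bool) i = none) =
      (Finset.univ.filter fun i => x i = none).image Fin.castSucc := by
  ext i
  rcases Fin.eq_castSucc_or_eq_last i with ⟨j, rfl⟩ | rfl
  · simp [Fin.snoc_castSucc, Fin.castSucc_inj]
  · simp only [Fin.snoc_last, Finset.mem_filter, Finset.mem_univ, true_and,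
      Finset.mem_image, reduceCtorEq, false_iff, not_exists, not_and]
    exact fun j _ => (Fin.castSucc_lt_last j).ne

lemma filter_snoc_none (x : Fin k → Option Bool) :
    (Finset.univ.filter fun i : Fin (k + 1) => (Fin.snoc x none : Fin (k + 1) → Option Bool) i = none) =
      insert (Fin.last k) ((Finset.univ.filter fun i => x i = none).image Fin.castSucc) := by
  ext i
  rcases Fin.eq_castSucc_or_eq_last i with ⟨j, rfl⟩ | rfl
  · simp [Fin.snoc_castSucc, Fin.castSucc_inj, (Fin.castSucc_lt_last j).ne]
  · simp [Fin.snoc_last]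

lemma isCubeFace_snoc_some {x : Fin k → Option Bool} {c : Bool} {n : ℕ} :
    IsCubeFace (k + 1) n (Fin.snoc x (some c)) ↔ IsCubeFace k n x := by
  unfold IsCubeFace
  rw [filter_snoc_some, Finset.card_image_of_injective _ (Fin.castSucc_injective k)]

lemma isCubeFace_snoc_none {x : Fin k → Option Bool} {n : ℕ} :
    IsCubeFace (k + 1) (n + 1) (Fin.snoc x (none : Option Bool)) ↔ IsCubeFace k n x := by
  unfold IsCubeFace
  rw [filter_snoc_none, Finset.card_insert_of_notMem (last_notMem_image _),
    Finset.card_image_of_injective _ (Fin.castSucc_injective k)]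
  omega

lemma units_sq (u : ℤˣ) : u * u = 1 := Int.units_mul_self u

lemma units_cancel (u v : ℤˣ) : u * (v * u) = v := by
  rw [mul_comm v u, ← mul_assoc, units_sq, one_mul]

lemma units_aux (u v w : ℤˣ) (h : u * v * w = 1) : w * v = u := by
  rcases Int.units_eq_one_or u with rfl | rfl <;> rcases Int.units_eq_one_or v with rfl | rfl <;>
    rcases Int.units_eq_one_or w with rfl | rfl <;> revert h <;> decide

end Aux

/-- Every `{±1}`-valued 2-cochain `φ` on the cube `[0,1]^k` whose product over the six
boundary 2-faces of every 3-face equals `1` (i.e. every multiplicative 2-cocycle) is the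
coboundary of a `{±1}`-valued 1-cochain `s`:  for every 2-face `ε`, the product of `s`
over the four boundary edges of `ε` equals `φ(ε)`. -/
theorem stmt_13 (k : ℕ) (φ : (Fin k → Option Bool) → ℤˣ)
    (hcocycle : ∀ θ : Fin k → Option Bool, IsCubeFace k 3 θ →
      (∏ i ∈ Finset.univ.filter fun i => θ i = none, ∏ b : Bool,
        φ (Function.update θ i (some b))) = 1) :
    ∃ s : (Fin k → Option Bool) → ℤˣ, ∀ ε : Fin k → Option Bool, IsCubeFace k 2 ε →
      (∏ i ∈ Finset.univ.filter fun i => ε i = none, ∏ b : Bool,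
        s (Function.update ε i (some b))) = φ ε := by
  induction k with
  | zero =>
    refine ⟨1, fun ε hε => absurd hε ?_⟩
    simp [IsCubeFace]
  | succ k ih =>
    -- restriction of φ to the bottom copy of the k-cube
    set φ₀ : (Fin k → Option Bool) → ℤˣ := fun x => φ (Fin.snoc x (some false)) with hφ₀def
    have hc₀ : ∀ θ : Fin k → Option Bool, IsCubeFace k 3 θ →
        (∏ i ∈ Finset.univ.filter fun i => θ i = none, ∏ b : Bool,
          φ₀ (Function.update θ i (some b))) = 1 := by
      intro θ hθ
      have h3 : IsCubeFace (k + 1) 3 (Fin.snoc θ (some false)) := isCubeFace_snoc_some.mpr hθ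
      have := hcocycle (Fin.snoc θ (some false)) h3
      rw [filter_snoc_some, prod_image_castSucc] at this
      simpa only [hφ₀def, Fin.snoc_update] using this
    obtain ⟨s₀, hs₀⟩ := ih φ₀ hc₀
    -- the cone construction: vertical edges get 1, bottom edges get s₀, top edges get
    -- φ(vertical face) * s₀(bottom edge)
    set s : (Fin (k + 1) → Option Bool) → ℤˣ := fun ε =>
      if ε (Fin.last k) = some false then s₀ (Fin.init ε)
      else if ε (Fin.last k) = none then 1
      else φ (Function.update ε (Fin.last k) none) * s₀ (Fin.init ε) with hsdef
    have hsf : ∀ z : Fin k → Option Bool, s (Fin.snoc z (some false)) = s₀ z := by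
      intro z; simp [hsdef, Fin.snoc_last, Fin.init_snoc]
    have hsn : ∀ z : Fin k → Option Bool, s (Fin.snoc z (none : Option Bool)) = 1 := by
      intro z; simp [hsdef, Fin.snoc_last]
    have hst : ∀ z : Fin k → Option Bool,
        s (Fin.snoc z (some true)) = φ (Fin.snoc z none) * s₀ z := by
      intro z
      simp [hsdef, Fin.snoc_last, Fin.init_snoc, Fin.update_snoc_last]
    refine ⟨s, ?_⟩
    intro ε hε
    -- rewrite ε as snoc of its initial part and last entry
    rw [← Fin.snoc_init_self ε] at hε ⊢
    set x := Fin.init ε with hx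
    set y := ε (Fin.last k) with hy
    clear_value x y
    match y with
    | none =>
      -- ε is a vertical 2-face over a base edge
      rw [filter_snoc_none, Finset.prod_insert (last_notMem_image _), prod_image_castSucc]
      have h1 : (∏ i ∈ Finset.univ.filter fun i => x i = none, ∏ b : Bool,
          s (Function.update (Fin.snoc x (none : Option Bool)) (Fin.castSucc i) (some b))) = 1 := by
        refine Finset.prod_eq_one fun i _ => Finset.prod_eq_one fun b _ => ?_
        rw [← Fin.snoc_update, hsn]
      have h2 : (∏ b : Bool,
          s (Function.update (Fin.snoc x (none : Option Bool)) (Fin.last k) (some b))) =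
          φ (Fin.snoc x none) := by
        rw [Fintype.prod_bool, Fin.update_snoc_last, Fin.update_snoc_last, hsf, hst,
          mul_assoc, units_sq, mul_one]
      rw [h1, h2, mul_one]
    | some false =>
      -- a 2-face in the bottom copy
      have hx2 : IsCubeFace k 2 x := isCubeFace_snoc_some.mp hε
      rw [filter_snoc_some, prod_image_castSucc]
      have := hs₀ x hx2
      simp only [hφ₀def] at this
      rw [← this]
      refine Finset.prod_congr rfl fun i _ => Finset.prod_congr rfl fun b _ => ?_
      rw [← Fin.snoc_update, hsf]
    | some true =>
      -- a 2-face in the top copy: use the cocycle condition on the 3-face x × I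
      have hx2 : IsCubeFace k 2 x := isCubeFace_snoc_some.mp hε
      have hθ : IsCubeFace (k + 1) 3 (Fin.snoc x (none : Option Bool)) :=
        isCubeFace_snoc_none.mpr hx2
      have hco := hcocycle _ hθ
      rw [filter_snoc_none, Finset.prod_insert (last_notMem_image _),
        prod_image_castSucc] at hco
      have h2 : (∏ b : Bool,
          φ (Function.update (Fin.snoc x (none : Option Bool)) (Fin.last k) (some b))) =
          φ (Fin.snoc x (some true)) * φ (Fin.snoc x (some false)) := by
        rw [Fintype.prod_bool, Fin.update_snoc_last, Fin.update_snoc_last]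
      rw [h2] at hco
      -- compute the product of s over the boundary of the top face
      rw [filter_snoc_some, prod_image_castSucc]
      have hterm : ∀ i b, s (Function.update (Fin.snoc x (some true)) (Fin.castSucc i) (some b)) =
          φ (Function.update (Fin.snoc x (none : Option Bool)) (Fin.castSucc i) (some b)) *
            s₀ (Function.update x i (some b)) := by
        intro i b
        rw [← Fin.snoc_update, hst, Fin.snoc_update]
      calc (∏ i ∈ Finset.univ.filter fun i => x i = none, ∏ b : Bool,
              s (Function.update (Fin.snoc x (some true)) (Fin.castSucc i) (some b)))
          = (∏ i ∈ Finset.univ.filter fun i => x i = none, ∏ b : Bool,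
              φ (Function.update (Fin.snoc x (none : Option Bool)) (Fin.castSucc i) (some b))) *
            ∏ i ∈ Finset.univ.filter fun i => x i = none, ∏ b : Bool,
              s₀ (Function.update x i (some b)) := by
            rw [← Finset.prod_mul_distrib]
            refine Finset.prod_congr rfl fun i _ => ?_
            rw [← Finset.prod_mul_distrib]
            exact Finset.prod_congr rfl fun b _ => hterm i b
        _ = (∏ i ∈ Finset.univ.filter fun i => x i = none, ∏ b : Bool,
              φ (Function.update (Fin.snoc x (none : Option Bool)) (Fin.castSucc i) (some b))) *
              φ (Fin.snoc x (some false)) := by rw [hs₀ x hx2]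
        _ = φ (Fin.snoc x (some true)) := by
            exact units_aux _ _ _ hco
end

section
/- Let R be a commutative ring. For each n ∈ ℤ let M_n be an R-module and ∂_n : M_n → M_{n+1} an R-linear map with ∂_{n+1} ∘ ∂_n = 0. Let A_n ⊆ M_n be submodules such that ∂_n is injective on A_n and A_{n+1} ∩ ∂_n(A_n) = 0 for all n. Define N_n := A_n + ∂_{n−1}(A_{n−1}). Then ∂_n(N_n) ⊆ N_{n+1} for all n (so N is a subcomplex), and the complex (N, ∂|_N) is acyclic: ker ∂_n ∩ N_n = ∂_{n−1}(N_{n−1}) for all n ∈ ℤ. -/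
/-- Let `(M, ∂)` be a cochain complex, and `A_n ⊆ M_n` submodules such that `∂` is injective
on `A_n` and `A_{n+1} ∩ ∂(A_n) = 0`.  Then `N_n := A_n + ∂(A_{n-1})` is a subcomplex
(`∂(N_n) ⊆ N_{n+1}`) and it is acyclic (`ker ∂ ∩ N_n = ∂(N_{n-1})`).
(Everything is stated with the degree shifted so that all indices are of the form
`n`, `n+1`, `n+1+1`; this is equivalent since `n` ranges over all of `ℤ`.) -/
theorem stmt_16 (R : Type*) [CommRing R] (M : ℤ → Type*)
    [∀ n, AddCommGroup (M n)] [∀ n, Module R (M n)]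
    (par : ∀ n : ℤ, M n →ₗ[R] M (n + 1))
    (hdd : ∀ n, par (n + 1) ∘ₗ par n = 0)
    (A : ∀ n : ℤ, Submodule R (M n))
    (hinj : ∀ n, Set.InjOn (par n) (A n : Set (M n)))
    (hdisj : ∀ n, A (n + 1) ⊓ (A n).map (par n) = ⊥) :
    (∀ n : ℤ, ((A (n + 1) ⊔ (A n).map (par n)).map (par (n + 1)))
        ≤ A (n + 1 + 1) ⊔ (A (n + 1)).map (par (n + 1))) ∧
      (∀ n : ℤ, LinearMap.ker (par (n + 1 + 1)) ⊓ (A (n + 1 + 1) ⊔ (A (n + 1)).map (par (n + 1)))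
        = (A (n + 1) ⊔ (A n).map (par n)).map (par (n + 1))) := by
  have hmap : ∀ n : ℤ, (A (n + 1) ⊔ (A n).map (par n)).map (par (n + 1))
      = (A (n + 1)).map (par (n + 1)) := by
    intro n
    rw [Submodule.map_sup, ← Submodule.map_comp, hdd, Submodule.map_zero, sup_bot_eq]
  constructor
  · intro n
    rw [hmap]
    exact le_sup_right
  · intro n
    rw [hmap]
    apply le_antisymm
    · rintro x ⟨hk, hx⟩
      rcases Submodule.mem_sup.1 hx with ⟨a, ha, b, hb, rfl⟩
      rcases hb with ⟨c, hc, rfl⟩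
      have hker : par (n + 1 + 1) a = 0 := by
        have h0 : par (n + 1 + 1) (par (n + 1) c) = 0 := by
          have := congrArg (fun f => f c) (hdd (n + 1))
          simpa using this
        have := LinearMap.mem_ker.1 hk
        rw [map_add, h0, add_zero] at this
        exact this
      have ha0 : a = 0 := hinj (n + 1 + 1) ha (Submodule.zero_mem _) (by simpa using hker)
      rw [ha0, zero_add]
      exact Submodule.mem_map_of_mem hc
    · rintro x ⟨c, hc, rfl⟩
      refine ⟨?_, Submodule.mem_sup_right (Submodule.mem_map_of_mem hc)⟩
      have := congrArg (fun f => f c) (hdd (n + 1))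
      simpa using this
end

section
/- Let R be a commutative ring, M an R-module, and d, H : M → M R-linear maps satisfying d ∘ d = 0, H ∘ H = 0 and H ∘ d ∘ H = 0. Set d' := d − d ∘ H + H ∘ d and f := id_M + H. Then f is an R-linear automorphism of M with inverse id_M − H, one has d' ∘ f = f ∘ d (equivalently d' = f ∘ d ∘ f⁻¹), and consequently d' ∘ d' = 0. -/
/-- If `H² = 0` and `H ∘ d ∘ H = 0`, then `f := id + H` is an automorphism of `M`
with inverse `id − H`, it intertwines `d` with `d' := d − d∘H + H∘d`
(i.e. `d' = f ∘ d ∘ f⁻¹`), and consequently `d' ∘ d' = 0`. -/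
theorem stmt_17 (R : Type*) [CommRing R] (M : Type*) [AddCommGroup M] [Module R M]
    (d H : M →ₗ[R] M) (hdd : d ∘ₗ d = 0) (hHH : H ∘ₗ H = 0) (hHdH : H ∘ₗ d ∘ₗ H = 0) :
    (((LinearMap.id : M →ₗ[R] M) + H) ∘ₗ ((LinearMap.id : M →ₗ[R] M) - H) = LinearMap.id ∧
        ((LinearMap.id : M →ₗ[R] M) - H) ∘ₗ ((LinearMap.id : M →ₗ[R] M) + H) = LinearMap.id) ∧
      (d - d ∘ₗ H + H ∘ₗ d) ∘ₗ ((LinearMap.id : M →ₗ[R] M) + H)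
          = ((LinearMap.id : M →ₗ[R] M) + H) ∘ₗ d ∧
      (d - d ∘ₗ H + H ∘ₗ d) ∘ₗ (d - d ∘ₗ H + H ∘ₗ d) = 0 := by
  simp only [← Module.End.mul_eq_comp, ← Module.End.one_eq_id] at *
  refine ⟨⟨?_, ?_⟩, ?_, ?_⟩ <;> noncomm_ring <;>
    (try rw [← mul_assoc] at hHdH) <;> simp [← mul_assoc, hdd, hHH, hHdH]
end
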